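/- Let q ∈ ℂ with 0 < |q| < 1. Then for every integer n ≥ 0, Σ_{j=0}^{n} q^{n-j} / ((q²;q²)_{n-j} · (q;q²)_{j+1}) = Σ_{j=0}^{n} (-1)^j q^{j(j+1)} / ((q;q)_{n-j} · (q²;q²)_j · (1 - q^{2j+1})). -/

import Mathlib

/-!
With `U(x) = Σ xⁿ/(q²;q²)ₙ = 1/(x;q²)_∞`, the left side is the `n`-th coefficient of `W(x) U(qx)`,
where `W(x) = Σ xⁿ/(q;q²)ₙ₊₁`, and the right side is that of `K(x) S(x)`, where
`S(x) = Σ xⁿ/(q;q)ₙ` and `K(x) = Σ (-1)ʲ q^{j(j+1)} xʲ/((q²;q²)ⱼ (1 - q^{2j+1}))`.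
The Euler-type identities `S(x) = U(x) U(qx)` and `W = K U` then give `W(x) U(qx) = K S`.
Both are proved by showing that the two sides satisfy the same q-difference equation
`(1 - x) F(x) = r + c F(ax)`, which determines `F` from its constant term when `c aⁿ ≠ 1`
for all `n ≥ 1`.
For `W = K U`, the equation satisfied by `K` involves `(x;q²)_∞ = 1/U`.
-/

noncomputable def qPoch (x q : ℂ) (n : ℕ) : ℂ :=
  ∏ i ∈ Finset.range n, (1 - x * q ^ i)

open PowerSeries

theorem qPoch_succ (x q : ℂ) (n : ℕ) : qPoch x q (n + 1) = qPoch x q n * (1 - x * q ^ n) :=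
  Finset.prod_range_succ _ _

theorem qPoch_ne_zero {x q : ℂ} (h : ∀ i, x * q ^ i ≠ 1) (n : ℕ) : qPoch x q n ≠ 0 :=
  Finset.prod_ne_zero_iff.2 fun i _ ↦ sub_ne_zero.2 (h i).symm

theorem inv_qPoch_succ_mul {x q : ℂ} {n : ℕ} (h : x * q ^ n ≠ 1) :
    (qPoch x q (n + 1))⁻¹ * (1 - x * q ^ n) = (qPoch x q n)⁻¹ := by
  rw [qPoch_succ, mul_inv, mul_assoc, inv_mul_cancel₀ (sub_ne_zero.2 h.symm), mul_one]

theorem pow_succ_ne_one_of_not_isOfFinOrder {M : Type*} [Monoid M] {b : M}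
    (hb : ¬IsOfFinOrder b) (n : ℕ) : b ^ (n + 1) ≠ 1 :=
  fun h ↦ hb (isOfFinOrder_iff_pow_eq_one.2 ⟨n + 1, n.succ_pos, h⟩)

theorem pow_mul_succ_eq_sq_pow_mul_sq_pow_choose (q : ℂ) (n : ℕ) :
    q ^ (n * (n + 1)) = (q ^ 2) ^ n * (q ^ 2) ^ n.choose 2 := by
  have h : (n + 1) * n = (n + n.choose 2) * 2 := by
    simpa [Nat.choose_succ_succ'] using Nat.add_one_mul_choose_eq n 1
  rw [← pow_mul, ← pow_mul, ← pow_add, mul_comm n, h]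
  ring

namespace PowerSeries

theorem coeff_mul_eq_sum_range {R : Type*} [Semiring R] (φ ψ : R⟦X⟧) (n : ℕ) :
    coeff n (φ * ψ) = ∑ k ∈ Finset.range (n + 1), coeff k φ * coeff (n - k) ψ := by
  rw [coeff_mul, Finset.Nat.sum_antidiagonal_eq_sum_range_succ fun i j ↦ coeff i φ * coeff j ψ]

variable {R : Type*} [CommRing R]

theorem coeff_succ_one_sub_X_mul (F : R⟦X⟧) (n : ℕ) :
    coeff (n + 1) ((1 - X) * F) = coeff (n + 1) F - coeff n F := by
  rw [sub_mul, one_mul, map_sub, coeff_succ_X_mul]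

variable [IsDomain R]

theorem eq_zero_of_one_sub_X_mul_eq {D : R⟦X⟧} {a c : R} (hca : ∀ n, c * a ^ (n + 1) ≠ 1)
    (h0 : constantCoeff D = 0) (hD : (1 - X) * D = C c * rescale a D) : D = 0 := by
  ext n
  induction n with
  | zero => simpa using h0
  | succ n ih =>
    have hn := congrArg (coeff (n + 1)) hD
    rw [coeff_succ_one_sub_X_mul, ih, map_zero, coeff_C_mul, coeff_rescale] at hn
    have : coeff (n + 1) D * (1 - c * a ^ (n + 1)) = 0 := by linear_combination hn
    simpa [sub_ne_zero.2 (hca n).symm] using this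

theorem eq_C_constantCoeff_of_rescale_eq {F : R⟦X⟧} {a : R} (ha : ∀ n, a ^ (n + 1) ≠ 1)
    (h : rescale a F = F) : F = C (constantCoeff F) := by
  ext (_ | n)
  · simp
  · have hn := congrArg (coeff (n + 1)) h
    rw [coeff_rescale] at hn
    have : coeff (n + 1) F * (a ^ (n + 1) - 1) = 0 := by linear_combination hn
    simpa [coeff_C, sub_ne_zero.2 (ha n)] using this

end PowerSeries

-- `qExp b = 1/(x;b)_∞` and `qExpInv b = (x;b)_∞`, Euler's two q-exponentials.
noncomputable def qExp (b : ℂ) : ℂ⟦X⟧ :=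
  mk fun n ↦ (qPoch b b n)⁻¹

noncomputable def qExpInv (b : ℂ) : ℂ⟦X⟧ :=
  mk fun n ↦ (-1) ^ n * b ^ n.choose 2 * (qPoch b b n)⁻¹

section qExp

variable {b : ℂ} (hb : ¬IsOfFinOrder b)
include hb

theorem self_mul_pow_ne_one (n : ℕ) : b * b ^ n ≠ 1 :=
  pow_succ' b n ▸ pow_succ_ne_one_of_not_isOfFinOrder hb n

theorem one_sub_X_mul_qExp : (1 - X) * qExp b = rescale b (qExp b) := by
  ext (_ | n)
  · simp [qExp, qPoch]
  · rw [coeff_succ_one_sub_X_mul, coeff_rescale, qExp, coeff_mk, coeff_mk,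
      ← inv_qPoch_succ_mul (self_mul_pow_ne_one hb n)]
    ring

theorem qExpInv_eq_one_sub_X_mul : qExpInv b = (1 - X) * rescale b (qExpInv b) := by
  ext (_ | n)
  · simp [qExpInv, qPoch, rescale_mk]
  · rw [coeff_succ_one_sub_X_mul, coeff_rescale, coeff_rescale, qExpInv, coeff_mk, coeff_mk,
      ← inv_qPoch_succ_mul (self_mul_pow_ne_one hb n), Nat.choose_succ_succ', Nat.choose_one_right]
    ring

theorem qExp_mul_qExpInv : qExp b * qExpInv b = 1 := by
  have hfix : rescale b (qExp b * qExpInv b) = qExp b * qExpInv b := by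
    rw [map_mul, ← one_sub_X_mul_qExp hb]
    conv_rhs => rw [qExpInv_eq_one_sub_X_mul hb]
    ring
  rw [eq_C_constantCoeff_of_rescale_eq (pow_succ_ne_one_of_not_isOfFinOrder hb) hfix]
  simp [qExp, qExpInv, qPoch]

end qExp

noncomputable def oddPochRecipSeries (q : ℂ) : ℂ⟦X⟧ :=
  mk fun n ↦ (qPoch q (q ^ 2) (n + 1))⁻¹

noncomputable def oddPochCofactor (q : ℂ) : ℂ⟦X⟧ :=
  mk fun n ↦ (-1) ^ n * q ^ (n * (n + 1)) / (qPoch (q ^ 2) (q ^ 2) n * (1 - q ^ (2 * n + 1)))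

section oddPoch

variable {q : ℂ} (hq : ¬IsOfFinOrder q)
include hq

theorem not_isOfFinOrder_sq : ¬IsOfFinOrder (q ^ 2) := by
  simpa [isOfFinOrder_pow] using hq

theorem mul_sq_pow_ne_one (n : ℕ) : q * (q ^ 2) ^ n ≠ 1 := by
  rw [← pow_mul, ← pow_succ']
  exact pow_succ_ne_one_of_not_isOfFinOrder hq _

theorem qExp_eq_qExp_sq_mul_rescale : qExp q = qExp (q ^ 2) * rescale q (qExp (q ^ 2)) := by
  have hU := one_sub_X_mul_qExp (not_isOfFinOrder_sq hq)
  have hD : (1 - X) * (qExp q - qExp (q ^ 2) * rescale q (qExp (q ^ 2))) =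
      C 1 * rescale q (qExp q - qExp (q ^ 2) * rescale q (qExp (q ^ 2))) := by
    rw [mul_sub, one_sub_X_mul_qExp hq, ← mul_assoc, hU, sq, ← rescale_rescale]
    simp only [map_one, one_mul, map_sub, map_mul]
    ring
  refine sub_eq_zero.1 (eq_zero_of_one_sub_X_mul_eq (fun n ↦ ?_) ?_ hD)
  · simpa using pow_succ_ne_one_of_not_isOfFinOrder hq n
  · simp [qExp, qPoch, rescale_mk]

theorem oddPochCofactor_sub_C_mul_rescale :
    oddPochCofactor q - C q * rescale (q ^ 2) (oddPochCofactor q) =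
      rescale (q ^ 2) (qExpInv (q ^ 2)) := by
  ext n
  have hP := qPoch_ne_zero (self_mul_pow_ne_one (not_isOfFinOrder_sq hq)) n
  have hn : 1 - q ^ (2 * n + 1) ≠ 0 := by
    refine sub_ne_zero.2 (Ne.symm ?_)
    simpa [← pow_mul, ← pow_succ'] using mul_sq_pow_ne_one hq n
  simp only [map_sub, coeff_C_mul, coeff_rescale, oddPochCofactor, qExpInv, coeff_mk]
  rw [pow_mul_succ_eq_sq_pow_mul_sq_pow_choose]
  field_simp
  ring

theorem one_sub_X_mul_oddPochRecipSeries :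
    (1 - X) * oddPochRecipSeries q = 1 + C q * rescale (q ^ 2) (oddPochRecipSeries q) := by
  ext (_ | n)
  · have h1 : 1 - q ≠ 0 := sub_ne_zero.2 (by simpa using (mul_sq_pow_ne_one hq 0).symm)
    simp only [oddPochRecipSeries, qPoch, coeff_zero_eq_constantCoeff, map_mul, map_sub,
      constantCoeff_one, constantCoeff_X, sub_zero, constantCoeff_mk, zero_add, Finset.range_one,
      Finset.prod_singleton, pow_zero, mul_one, one_mul, rescale_mk, map_add, constantCoeff_C]
    field_simp
    ring
  · rw [coeff_succ_one_sub_X_mul, map_add, coeff_one, coeff_C_mul, coeff_rescale,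
      oddPochRecipSeries, coeff_mk, coeff_mk, ← inv_qPoch_succ_mul (mul_sq_pow_ne_one hq (n + 1))]
    simp only [Nat.add_one_ne_zero, if_false]
    ring

theorem oddPochRecipSeries_eq_oddPochCofactor_mul_qExp :
    oddPochRecipSeries q = oddPochCofactor q * qExp (q ^ 2) := by
  have hq2 := not_isOfFinOrder_sq hq
  have hKU : (1 - X) * (oddPochCofactor q * qExp (q ^ 2)) =
      1 + C q * rescale (q ^ 2) (oddPochCofactor q * qExp (q ^ 2)) := by
    calc (1 - X) * (oddPochCofactor q * qExp (q ^ 2))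
        = oddPochCofactor q * rescale (q ^ 2) (qExp (q ^ 2)) := by
          rw [← one_sub_X_mul_qExp hq2]; ring
      _ = (C q * rescale (q ^ 2) (oddPochCofactor q) + rescale (q ^ 2) (qExpInv (q ^ 2))) *
            rescale (q ^ 2) (qExp (q ^ 2)) := by
          rw [← oddPochCofactor_sub_C_mul_rescale hq]; ring
      _ = C q * rescale (q ^ 2) (oddPochCofactor q * qExp (q ^ 2)) +
            rescale (q ^ 2) (qExp (q ^ 2) * qExpInv (q ^ 2)) := by
          simp only [map_mul]; ring
      _ = _ := by rw [qExp_mul_qExpInv hq2, map_one, add_comm]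
  have hD : (1 - X) * (oddPochRecipSeries q - oddPochCofactor q * qExp (q ^ 2)) =
      C q * rescale (q ^ 2) (oddPochRecipSeries q - oddPochCofactor q * qExp (q ^ 2)) := by
    rw [mul_sub, one_sub_X_mul_oddPochRecipSeries hq, hKU, map_sub]
    ring
  refine sub_eq_zero.1 (eq_zero_of_one_sub_X_mul_eq (fun n ↦ ?_) ?_ hD)
  · exact mul_sq_pow_ne_one hq _
  · simp [oddPochRecipSeries, oddPochCofactor, qExp, qPoch]

end oddPoch

theorem coefficient_identity_general (q : ℂ) (h1 : ‖q‖ < 1) :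
    ∀ n : ℕ,
      ∑ j ∈ Finset.range (n + 1),
          q ^ (n - j) / (qPoch (q ^ 2) (q ^ 2) (n - j) * qPoch q (q ^ 2) (j + 1)) =
        ∑ j ∈ Finset.range (n + 1),
          (-1 : ℂ) ^ j * q ^ (j * (j + 1)) /
            (qPoch q q (n - j) * qPoch (q ^ 2) (q ^ 2) j * (1 - q ^ (2 * j + 1))) := by
  intro n
  have hq : ¬IsOfFinOrder q := fun h ↦ h1.ne h.norm_eq_one
  have key : oddPochRecipSeries q * rescale q (qExp (q ^ 2)) = oddPochCofactor q * qExp q := by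
    rw [oddPochRecipSeries_eq_oddPochCofactor_mul_qExp hq, qExp_eq_qExp_sq_mul_rescale hq]
    ring
  have hn := congrArg (coeff n) key
  rw [coeff_mul_eq_sum_range, coeff_mul_eq_sum_range] at hn
  convert hn using 2 with j _ j _
  · simp only [oddPochRecipSeries, qExp, coeff_rescale, coeff_mk]
    ring
  · simp only [oddPochCofactor, qExp, coeff_mk]
    rw [mul_assoc, div_mul_eq_div_div_swap, div_eq_mul_inv _ (qPoch q q _)]

/-- For `0 < |q| < 1` and every `n ≥ 0`,
`Σ_{j=0}^{n} q^{n-j}/((q²;q²)_{n-j} (q;q²)_{j+1})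
  = Σ_{j=0}^{n} (-1)^j q^{j(j+1)}/((q;q)_{n-j} (q²;q²)_j (1-q^{2j+1}))`. -/
theorem coefficient_identity (q : ℂ) (h0 : 0 < ‖q‖) (h1 : ‖q‖ < 1) :
    ∀ n : ℕ,
      ∑ j ∈ Finset.range (n + 1),
          q ^ (n - j) / (qPoch (q ^ 2) (q ^ 2) (n - j) * qPoch q (q ^ 2) (j + 1)) =
        ∑ j ∈ Finset.range (n + 1),
          (-1 : ℂ) ^ j * q ^ (j * (j + 1)) /
            (qPoch q q (n - j) * qPoch (q ^ 2) (q ^ 2) j * (1 - q ^ (2 * j + 1))) :=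
  coefficient_identity_general q h1
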